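/- (Ćirić-type fixed set theorem in C_{ψ,d}-complete Lim-spaces.) Let Y be a partially ordered set, d: X² → Y, and ψ: ⋃_n Yⁿ → Y a coordinate-wise non-decreasing map with ψ(y₂,...,y_n) ≤ ψ(y₁,...,y_n). Let (X, Lim) be a C_{ψ,d}-complete Lim-space, where C_{ψ,d} is the family of sequences {x_n} for which {ψ(d(x₁,x₂),...,d(x_{n-1},x_n))} is bounded from above. Suppose λ: Y → Y is non-decreasing and for each y ∈ Y the sequence {ψ(y, λ(y), ..., λⁿ(y))} is bounded from above. Let f: X → X be weakly orbital continuous and x₀ ∈ X be such that: (i) there exists α ∈ Y with d(x, y) ≤ α for all x, y ∈ O(f, x₀); (ii) for all n > 1 and x, y ∈ O_n(f, x₀) there exist x', y' ∈ O_{n-1}(f, x₀) with d(x, y) ≤ λ(d(x', y')). Then f has a nonempty fixed set. -/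

import Mathlib

/-! If the orbit of `x₀` repeats a point, a tail `O_a(f, x₀)` of the orbit is already a fixed
set. Otherwise the shifted orbit `x_n = f^{n+1}(x₀)` consists of distinct points, and the
contraction condition gives `d(x_n, x_{n+1}) ≤ λⁿ(α)`; by monotonicity of `ψ` the sequence lies in
`C_{ψ,d}`, so completeness yields a nonempty limit set, which weak orbital continuity together with
the shift invariance of `Lim` makes a fixed set. -/

/-- `O_n(f, x₀) = {f^k(x₀) : k ≥ n}`. -/
def orbFrom {X : Type*} (f : X → X) (x0 : X) (n : ℕ) : Set X :=
  {y : X | ∃ k : ℕ, n ≤ k ∧ y = f^[k] x0}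

/-- The Cauchy structure `C_{ψ,d}`: sequences whose `ψ`-values of consecutive-distance
tuples are bounded from above. -/
def CpsidStruct {X Y : Type*} [PartialOrder Y] (ψ : List Y → Y) (d : X → X → Y)
    (x : ℕ → X) : Prop :=
  ∃ α : Y, ∀ n : ℕ, ψ ((List.range n).map (fun i => d (x i) (x (i + 1)))) ≤ α

section Orbit

variable {X : Type*} (f : X → X) (x0 : X)

theorem iterate_mem_orbFrom {n k : ℕ} (h : n ≤ k) : f^[k] x0 ∈ orbFrom f x0 n :=
  ⟨k, h, rfl⟩

theorem orbFrom_antitone : Antitone (orbFrom f x0) := by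
  rintro m n hmn _ ⟨k, hk, rfl⟩
  exact iterate_mem_orbFrom f x0 (hmn.trans hk)

theorem image_orbFrom (n : ℕ) : f '' orbFrom f x0 n = orbFrom f x0 (n + 1) := by
  ext z
  constructor
  · rintro ⟨_, ⟨k, hk, rfl⟩, rfl⟩
    rw [← Function.iterate_succ_apply' f k x0]
    exact iterate_mem_orbFrom f x0 (by omega)
  · rintro ⟨_ | k, hk, rfl⟩
    · omega
    exact ⟨f^[k] x0, iterate_mem_orbFrom f x0 (by omega), (Function.iterate_succ_apply' f k x0).symm⟩

theorem orbFrom_succ_eq_of_iterate_eq {a b : ℕ} (hab : a < b) (h : f^[a] x0 = f^[b] x0) :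
    orbFrom f x0 (a + 1) = orbFrom f x0 a := by
  refine (orbFrom_antitone f x0 a.le_succ).antisymm ?_
  rintro _ ⟨k, hk, rfl⟩
  rcases hk.eq_or_lt with rfl | hlt
  · exact h ▸ iterate_mem_orbFrom f x0 hab
  · exact iterate_mem_orbFrom f x0 hlt

theorem exists_image_orbFrom_eq_of_not_injective
    (h : ¬ Function.Injective fun n => f^[n] x0) :
    ∃ n, f '' orbFrom f x0 n = orbFrom f x0 n := by
  obtain ⟨a, b, hab, hne⟩ := Function.not_injective_iff.mp h
  rcases hne.lt_or_gt with hlt | hlt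
  · exact ⟨a, (image_orbFrom f x0 a).trans (orbFrom_succ_eq_of_iterate_eq f x0 hlt hab)⟩
  · exact ⟨b, (image_orbFrom f x0 b).trans (orbFrom_succ_eq_of_iterate_eq f x0 hlt hab.symm)⟩

end Orbit

theorem le_iterate_of_mem_orbFrom {X Y : Type*} [Preorder Y] {d : X → X → Y} {lam : Y → Y}
    (hmono : Monotone lam) {f : X → X} {x0 : X} {α : Y}
    (hbdd : ∀ x ∈ orbFrom f x0 0, ∀ y ∈ orbFrom f x0 0, d x y ≤ α)
    (hcontr : ∀ n : ℕ, 1 < n → ∀ x ∈ orbFrom f x0 n, ∀ y ∈ orbFrom f x0 n,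
      ∃ x' ∈ orbFrom f x0 (n - 1), ∃ y' ∈ orbFrom f x0 (n - 1), d x y ≤ lam (d x' y')) :
    ∀ n : ℕ, ∀ a ∈ orbFrom f x0 (n + 1), ∀ b ∈ orbFrom f x0 (n + 1), d a b ≤ lam^[n] α
  | 0, a, ha, b, hb =>
    hbdd a (orbFrom_antitone f x0 (Nat.zero_le 1) ha) b (orbFrom_antitone f x0 (Nat.zero_le 1) hb)
  | n + 1, a, ha, b, hb => by
    obtain ⟨a', ha', b', hb', hle⟩ := hcontr (n + 2) (by omega) a ha b hb
    calc d a b ≤ lam (d a' b') := hle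
      _ ≤ lam (lam^[n] α) :=
        hmono (le_iterate_of_mem_orbFrom hmono hbdd hcontr n a' ha' b' hb')
      _ = lam^[n + 1] α := (Function.iterate_succ_apply' lam n α).symm

theorem cpsidStruct_of_le_iterate {X Y : Type*} [PartialOrder Y] {ψ : List Y → Y}
    (hψ : ∀ (y : Y) (l : List Y), ψ l ≤ ψ (y :: l))
    (hψmono : ∀ l₁ l₂ : List Y, List.Forall₂ (· ≤ ·) l₁ l₂ → ψ l₁ ≤ ψ l₂)
    {d : X → X → Y} {x : ℕ → X} {lam : Y → Y} {α β : Y}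
    (hβ : ∀ n : ℕ, ψ ((List.range (n + 1)).map (fun i => lam^[i] α)) ≤ β)
    (hx : ∀ i, d (x i) (x (i + 1)) ≤ lam^[i] α) :
    CpsidStruct ψ d x := by
  refine ⟨β, fun n => ?_⟩
  cases n with
  | zero => simpa using (hψ α []).trans (by simpa using hβ 0)
  | succ m =>
    refine (hψmono _ _ ?_).trans (hβ m)
    rw [List.forall₂_map_right_iff, List.forall₂_map_left_iff]
    exact List.forall₂_same.2 fun i _ => hx i

theorem image_lim_orbit_eq {X : Type*} {Lim : (ℕ → X) → Set X}
    (hLim : ∀ x : ℕ → X, Lim x = Lim (fun n => x (n + 1))) {f : X → X}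
    (hcont : ∀ x0 : X, (Lim (fun n => f^[n] x0)).Nonempty →
      Lim (fun n => f (f^[n] x0)) = f '' Lim (fun n => f^[n] x0))
    {x0 : X} (hne : (Lim (fun n => f^[n] x0)).Nonempty) :
    f '' Lim (fun n => f^[n] x0) = Lim (fun n => f^[n] x0) := by
  rw [← hcont x0 hne, hLim fun n => f^[n] x0]
  simp only [Function.iterate_succ_apply']

/-- Ćirić-type fixed set theorem in C_{ψ,d}-complete Lim-spaces. -/
theorem stmt_16 {X Y : Type*} [PartialOrder Y]
    (d : X → X → Y) (ψ : List Y → Y)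
    (hψ : ∀ (y : Y) (l : List Y), ψ l ≤ ψ (y :: l))
    (hψmono : ∀ l₁ l₂ : List Y, List.Forall₂ (· ≤ ·) l₁ l₂ → ψ l₁ ≤ ψ l₂)
    (Lim : (ℕ → X) → Set X)
    (hLim : ∀ x : ℕ → X, Lim x = Lim (fun n => x (n + 1)))
    (hcomplete : ∀ x : ℕ → X, CpsidStruct ψ d x → Function.Injective x →
      (Lim x).Nonempty)
    (lam : Y → Y) (hmono : Monotone lam)
    (hbddlam : ∀ y : Y, ∃ β : Y, ∀ n : ℕ,
      ψ ((List.range (n + 1)).map (fun i => lam^[i] y)) ≤ β)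
    (f : X → X)
    (hcont : ∀ x0 : X, (Lim (fun n => f^[n] x0)).Nonempty →
      Lim (fun n => f (f^[n] x0)) = f '' Lim (fun n => f^[n] x0))
    (x0 : X) (α : Y)
    (hbdd : ∀ x ∈ orbFrom f x0 0, ∀ y ∈ orbFrom f x0 0, d x y ≤ α)
    (hcontr : ∀ n : ℕ, 1 < n → ∀ x ∈ orbFrom f x0 n, ∀ y ∈ orbFrom f x0 n,
      ∃ x' ∈ orbFrom f x0 (n - 1), ∃ y' ∈ orbFrom f x0 (n - 1),
        d x y ≤ lam (d x' y')) :
    ∃ A : Set X, A.Nonempty ∧ f '' A = A := by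
  set y : ℕ → X := fun n => f^[n + 1] x0
  by_cases hinj : Function.Injective y
  · obtain ⟨β, hβ⟩ := hbddlam α
    have hy : CpsidStruct ψ d y := cpsidStruct_of_le_iterate hψ hψmono hβ fun i =>
      le_iterate_of_mem_orbFrom hmono hbdd hcontr i _ (iterate_mem_orbFrom f x0 le_rfl) _
        (iterate_mem_orbFrom f x0 (Nat.le_succ _))
    have hne : (Lim fun n => f^[n] x0).Nonempty := by
      rw [hLim]
      exact hcomplete y hy hinj
    exact ⟨_, hne, image_lim_orbit_eq hLim hcont hne⟩
  · obtain ⟨n, hn⟩ := exists_image_orbFrom_eq_of_not_injective f x0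
      fun h => hinj (h.comp Nat.succ_injective)
    exact ⟨orbFrom f x0 n, ⟨f^[n] x0, iterate_mem_orbFrom f x0 le_rfl⟩, hn⟩
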